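/- arXiv:2403.14540 — 5 statements merged into one kernel-verified Lean document; each statement's English description precedes it below -/
import Mathlib

section
/- Let H = (V, E) be a hypergraph, S ⊊ V with |S| ≥ 2, let T = V \ S, and let x : E → ℝ satisfy x(V) = |V| - 1. Then x(S) ≤ |S| - 1 if and only if x(T) + x(T : V \ T) ≥ |T|. -/
open Finset

/-- `x(A) = Σ_{e ∈ E} max(|e ∩ A| - 1, 0) · x_e`. -/
def xWeight {V : Type*} [DecidableEq V] (E : Finset (Finset V)) (x : Finset V → ℝ)
    (A : Finset V) : ℝ :=
  ∑ e ∈ E, (((e ∩ A).card - 1 : ℕ) : ℝ) * x e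

/-- `x(A:B) = Σ_{e ∈ E, e ∩ A ≠ ∅ ∧ e ∩ B ≠ ∅} x_e`. -/
def xCut {V : Type*} [DecidableEq V] (E : Finset (Finset V)) (x : Finset V → ℝ)
    (A B : Finset V) : ℝ :=
  ∑ e ∈ E.filter (fun e => (e ∩ A).Nonempty ∧ (e ∩ B).Nonempty), x e

/-! Splitting `V = T ⊔ S` gives `x(V) = x(T) + x(S) + x(T:S)`, because an edge meeting both
parts loses one more from `|e ∩ V| - 1` than from `(|e ∩ T| - 1) + (|e ∩ S| - 1)`. Combined with
`|V| = |T| + |S|` and the total degree equation, `x(S) ≤ |S| - 1` and `x(T) + x(T:S) ≥ |T|`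
are the same linear inequality. -/

theorem card_union_sub_one_of_disjoint {α : Type*} [DecidableEq α] {s t : Finset α}
    (h : Disjoint s t) :
    (s ∪ t).card - 1 =
      (s.card - 1) + (t.card - 1) + if s.Nonempty ∧ t.Nonempty then 1 else 0 := by
  rw [card_union_of_disjoint h]
  split_ifs with hst
  · have := hst.1.card_pos
    have := hst.2.card_pos
    omega
  · rcases not_and_or.mp hst with hs | ht
    · simp [not_nonempty_iff_eq_empty.mp hs]
    · simp [not_nonempty_iff_eq_empty.mp ht]

theorem xWeight_union_of_disjoint {V : Type*} [DecidableEq V] (E : Finset (Finset V))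
    (x : Finset V → ℝ) {A B : Finset V} (hAB : Disjoint A B) :
    xWeight E x (A ∪ B) = xWeight E x A + xWeight E x B + xCut E x A B := by
  unfold xWeight xCut
  rw [sum_filter, ← sum_add_distrib, ← sum_add_distrib]
  refine sum_congr rfl fun e _ => ?_
  have hdisj : Disjoint (e ∩ A) (e ∩ B) :=
    disjoint_of_subset_left inter_subset_right (disjoint_of_subset_right inter_subset_right hAB)
  rw [inter_union_distrib_left, card_union_sub_one_of_disjoint hdisj]
  split_ifs <;> push_cast <;> ring

theorem stmt3_general {V : Type*} [DecidableEq V] (Vs : Finset V) (E : Finset (Finset V))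
    (x : Finset V → ℝ)
    (S T : Finset V) (hS : S ⊂ Vs) (hT : T = Vs \ S)
    (hdeg : xWeight E x Vs = (Vs.card : ℝ) - 1) :
    xWeight E x S ≤ (S.card : ℝ) - 1 ↔
      (T.card : ℝ) ≤ xWeight E x T + xCut E x T (Vs \ T) := by
  subst hT
  have hsplit := xWeight_union_of_disjoint E x (sdiff_disjoint : Disjoint (Vs \ S) S)
  rw [sdiff_union_of_subset hS.subset] at hsplit
  have hcard : ((Vs \ S).card : ℝ) + S.card = Vs.card := by
    exact_mod_cast card_sdiff_add_card_eq_card hS.subset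
  rw [Finset.sdiff_sdiff_eq_self hS.subset]
  constructor <;> intro h <;> linarith

/-- Alternate (anti-subtour) form of the subtour inequality: under the total degree
equation `x(V) = |V| - 1`, for `S ⊊ V` with `|S| ≥ 2` and `T = V \ S`,
`x(S) ≤ |S| - 1 ↔ x(T) + x(T : V \ T) ≥ |T|`. -/
theorem stmt3 {V : Type*} [DecidableEq V] (Vs : Finset V) (E : Finset (Finset V))
    (x : Finset V → ℝ) (hE : ∀ e ∈ E, e ⊆ Vs)
    (S T : Finset V) (hS : S ⊂ Vs) (hS2 : 2 ≤ S.card) (hT : T = Vs \ S)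
    (hdeg : xWeight E x Vs = (Vs.card : ℝ) - 1) :
    xWeight E x S ≤ (S.card : ℝ) - 1 ↔
      (T.card : ℝ) ≤ xWeight E x T + xCut E x T (Vs \ T) :=
  stmt3_general Vs E x S T hS hT hdeg
end

section
/- Single-vertex reduction: Let H = (V, E) be a hypergraph with nonnegative weights x : E → ℝ≥0, U ⊆ V with |U| ≥ 2, and v ∈ V \ U. If x(δ(v)) ≤ 1 and f(U ∪ {v}) < 1, then f(U) ≤ f(U ∪ {v}) < 1, where f(S) := |S| - x(S). -/
open Finset

/-!
Adding `v` to `U` raises `|U|` by one and raises `x(U)` by at most `x(δ(v))`: the term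
`max(|e ∩ U| - 1, 0)` of an edge `e` grows by at most one, and it grows at all only when
`e` contains `v` together with some vertex of `U`, i.e. only when `e ∈ δ(v)`.
-/

section

variable {V : Type*} [DecidableEq V]

theorem card_inter_insert_sub_one_le (e U : Finset V) {v : V} (hv : v ∉ U) :
    (((e ∩ insert v U).card - 1 : ℕ) : ℝ) - (((e ∩ U).card - 1 : ℕ) : ℝ) ≤
      if v ∈ e ∧ ¬ e ⊆ {v} then 1 else 0 := by
  by_cases hve : v ∈ e
  · rw [inter_insert_of_mem hve, card_insert_of_notMem fun h => hv (mem_inter.mp h).2]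
    rcases (e ∩ U).eq_empty_or_nonempty with hempty | ⟨u, hu⟩
    · simp only [hempty, card_empty, zero_add, Nat.sub_self, CharP.cast_eq_zero, sub_self]
      split_ifs <;> norm_num
    · obtain ⟨hue, huU⟩ := mem_inter.mp hu
      have hnot_loop : ¬ e ⊆ {v} := fun hsub => hv (mem_singleton.mp (hsub hue) ▸ huU)
      have hpos : 0 < (e ∩ U).card := card_pos.mpr ⟨u, hu⟩
      rw [if_pos ⟨hve, hnot_loop⟩, Nat.add_sub_cancel, Nat.cast_sub hpos]
      simp
  · rw [inter_insert_of_notMem hve, sub_self]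
    split_ifs <;> norm_num

theorem xWeight_insert_sub_le (E : Finset (Finset V)) {x : Finset V → ℝ}
    (hx : ∀ e ∈ E, 0 ≤ x e) {U : Finset V} {v : V} (hv : v ∉ U) :
    xWeight E x (insert v U) - xWeight E x U ≤
      ∑ e ∈ E.filter (fun e => v ∈ e ∧ ¬ e ⊆ {v}), x e := by
  rw [xWeight, xWeight, ← sum_sub_distrib, sum_filter]
  refine sum_le_sum fun e he => ?_
  rw [← sub_mul, ← boole_mul]
  exact mul_le_mul_of_nonneg_right (card_inter_insert_sub_one_le e U hv) (hx e he)

theorem card_sub_xWeight_le_insert (E : Finset (Finset V)) {x : Finset V → ℝ}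
    (hx : ∀ e ∈ E, 0 ≤ x e) {U : Finset V} {v : V} (hv : v ∉ U)
    (hdeg : ∑ e ∈ E.filter (fun e => v ∈ e ∧ ¬ e ⊆ {v}), x e ≤ 1) :
    (U.card : ℝ) - xWeight E x U ≤ ((insert v U).card : ℝ) - xWeight E x (insert v U) := by
  have hgain := xWeight_insert_sub_le E hx hv
  rw [card_insert_of_notMem hv, Nat.cast_succ]
  linarith

end

theorem stmt5_general {V : Type*} [DecidableEq V] (Vs : Finset V) (E : Finset (Finset V))
    (x : Finset V → ℝ) (hx : ∀ e ∈ E, 0 ≤ x e)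
    (U : Finset V)
    (v : V) (hv : v ∈ Vs \ U)
    (hdeg : ∑ e ∈ E.filter (fun e => v ∈ e ∧ ¬ e ⊆ {v}), x e ≤ 1)
    (hred : ((U ∪ {v}).card : ℝ) - xWeight E x (U ∪ {v}) < 1) :
    (U.card : ℝ) - xWeight E x U ≤ ((U ∪ {v}).card : ℝ) - xWeight E x (U ∪ {v}) ∧
      ((U ∪ {v}).card : ℝ) - xWeight E x (U ∪ {v}) < 1 := by
  refine ⟨?_, hred⟩
  rw [union_singleton]
  exact card_sub_xWeight_le_insert E hx (mem_sdiff.mp hv).2 hdeg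

/-- Single-vertex reduction: with nonnegative edge weights, `|U| ≥ 2`, `v ∉ U`,
`x(δ(v)) ≤ 1` (sum of weights of edges containing `v` and at least one other vertex),
and `f(U ∪ {v}) < 1` where `f(S) = |S| - x(S)`, we get `f(U) ≤ f(U ∪ {v}) < 1`. -/
theorem stmt5 {V : Type*} [DecidableEq V] (Vs : Finset V) (E : Finset (Finset V))
    (x : Finset V → ℝ) (hE : ∀ e ∈ E, e ⊆ Vs) (hx : ∀ e ∈ E, 0 ≤ x e)
    (U : Finset V) (hU : U ⊆ Vs) (hU2 : 2 ≤ U.card)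
    (v : V) (hv : v ∈ Vs \ U)
    (hdeg : ∑ e ∈ E.filter (fun e => v ∈ e ∧ ¬ e ⊆ {v}), x e ≤ 1)
    (hred : ((U ∪ {v}).card : ℝ) - xWeight E x (U ∪ {v}) < 1) :
    (U.card : ℝ) - xWeight E x U ≤ ((U ∪ {v}).card : ℝ) - xWeight E x (U ∪ {v}) ∧
      ((U ∪ {v}).card : ℝ) - xWeight E x (U ∪ {v}) < 1 :=
  stmt5_general Vs E x hx U v hv hdeg hred
end

section
/- Separation by connected components: Let H = (V, E) be a hypergraph with weights x : E → ℝ≥0 and let the support hypergraph (edges with x_e > 0) have connected components with vertex sets V_1, …, V_k partitioning V. Let S ⊆ V and S_j = S ∩ V_j. If f(S) < 1 then there exists j with f(S_j) < 1, where f(A) := |A| - x(A). -/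
open Finset

/-
Both `|·|` and `x(·)` split additively over the components: `|·|` because the components
partition `V`, and `x(·)` because an edge of positive weight lies inside one component, so its
trace on `S` is its trace on a single `S_j` (edges of weight zero contribute nothing). Hence
`f(S) = Σ_j f(S_j)`, and if every `f(S_j)` were at least `1`, then `f(S) ≥ k ≥ 1`.
-/

open Function

section Components

variable {V ι : Type*} [DecidableEq V] [Fintype ι] {P : ι → Finset V} {S : Finset V}

theorem card_eq_sum_card_inter (hP : Pairwise (Disjoint on P)) (hS : S ⊆ univ.sup P) :
    S.card = ∑ j, (S ∩ P j).card := by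
  have hS' : S = univ.biUnion fun j => S ∩ P j := by
    rw [← inter_biUnion, ← sup_eq_biUnion, inter_eq_left.2 hS]
  conv_lhs => rw [hS']
  exact card_biUnion fun i _ j _ hij => (hP hij).mono inter_subset_right inter_subset_right

theorem card_sub_one_eq_sum_card_inter_sub_one {T : Finset V} (hT : T ⊆ univ.sup P)
    (hone : ∀ i j, (T ∩ P i).Nonempty → (T ∩ P j).Nonempty → i = j) :
    T.card - 1 = ∑ j, ((T ∩ P j).card - 1) := by
  obtain rfl | ⟨v, hv⟩ := T.eq_empty_or_nonempty
  · simp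
  obtain ⟨j₀, -, hvj₀⟩ := mem_sup.1 (hT hv)
  have hmeets : (T ∩ P j₀).Nonempty := ⟨v, mem_inter.2 ⟨hv, hvj₀⟩⟩
  rw [sum_eq_single j₀]
  · congr 2
    refine (inter_eq_left.2 fun w hw => ?_).symm
    obtain ⟨j, -, hwj⟩ := mem_sup.1 (hT hw)
    exact hone j j₀ ⟨w, mem_inter.2 ⟨hw, hwj⟩⟩ hmeets ▸ hwj
  · intro j _ hj
    rw [not_nonempty_iff_eq_empty.1 fun h => hj (hone j j₀ h hmeets)]
    rfl
  · simp

theorem xWeight_eq_sum_xWeight_inter {E : Finset (Finset V)} {x : Finset V → ℝ}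
    (hx : ∀ e ∈ E, 0 ≤ x e)
    (hcomp : ∀ e ∈ E, 0 < x e → ∀ i j, i ≠ j →
      ¬((e ∩ P i).Nonempty ∧ (e ∩ P j).Nonempty))
    (hS : S ⊆ univ.sup P) :
    xWeight E x S = ∑ j, xWeight E x (S ∩ P j) := by
  unfold xWeight
  rw [sum_comm]
  refine sum_congr rfl fun e he => ?_
  obtain h0 | hpos := (hx e he).eq_or_lt
  · simp [← h0]
  have hone : ∀ i j, (e ∩ S ∩ P i).Nonempty → (e ∩ S ∩ P j).Nonempty → i = j :=
    fun i j hi hj => by_contra fun hij => hcomp e he hpos i j hij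
      ⟨hi.mono (inter_subset_inter_right inter_subset_left),
        hj.mono (inter_subset_inter_right inter_subset_left)⟩
  simp only [← inter_assoc, ← sum_mul, ← Nat.cast_sum,
    ← card_sub_one_eq_sum_card_inter_sub_one (inter_subset_right.trans hS) hone]

theorem card_sub_xWeight_eq_sum {E : Finset (Finset V)} {x : Finset V → ℝ}
    (hx : ∀ e ∈ E, 0 ≤ x e)
    (hcomp : ∀ e ∈ E, 0 < x e → ∀ i j, i ≠ j →
      ¬((e ∩ P i).Nonempty ∧ (e ∩ P j).Nonempty))
    (hP : Pairwise (Disjoint on P)) (hS : S ⊆ univ.sup P) :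
    (S.card : ℝ) - xWeight E x S = ∑ j, (((S ∩ P j).card : ℝ) - xWeight E x (S ∩ P j)) := by
  rw [sum_sub_distrib, ← Nat.cast_sum, ← card_eq_sum_card_inter hP hS,
    xWeight_eq_sum_xWeight_inter hx hcomp hS]

end Components

theorem stmt6_general {V : Type*} [DecidableEq V] (Vs : Finset V) (E : Finset (Finset V))
    (x : Finset V → ℝ) (hx : ∀ e ∈ E, 0 ≤ x e)
    (k : ℕ) (hk : 0 < k) (Vpart : Fin k → Finset V)
    (hdisj : ∀ i j, i ≠ j → Disjoint (Vpart i) (Vpart j))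
    (hcover : Finset.univ.sup Vpart = Vs)
    (hcomp : ∀ e ∈ E, 0 < x e → ∀ i j, i ≠ j →
      ¬((e ∩ Vpart i).Nonempty ∧ (e ∩ Vpart j).Nonempty))
    (S : Finset V) (hS : S ⊆ Vs)
    (hviol : (S.card : ℝ) - xWeight E x S < 1) :
    ∃ j, ((S ∩ Vpart j).card : ℝ) - xWeight E x (S ∩ Vpart j) < 1 := by
  rw [card_sub_xWeight_eq_sum hx hcomp hdisj (hcover ▸ hS)] at hviol
  have hk' : (1 : ℝ) ≤ ∑ _j : Fin k, (1 : ℝ) := by simpa [Nat.one_le_iff_ne_zero] using hk.ne'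
  obtain ⟨j, -, hj⟩ := exists_lt_of_sum_lt (hviol.trans_le hk')
  exact ⟨j, hj⟩

/-- Separation by connected components: if the vertex sets `V_1, …, V_k` of the
connected components of the support hypergraph partition `V` (so no edge of
positive weight meets two distinct components), `S ⊆ V`, and `f(S) < 1` where
`f(A) = |A| - x(A)`, then `f(S ∩ V_j) < 1` for some `j`. -/
theorem stmt6 {V : Type*} [DecidableEq V] (Vs : Finset V) (E : Finset (Finset V))
    (x : Finset V → ℝ) (hE : ∀ e ∈ E, e ⊆ Vs) (hx : ∀ e ∈ E, 0 ≤ x e)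
    (k : ℕ) (hk : 0 < k) (Vpart : Fin k → Finset V)
    (hdisj : ∀ i j, i ≠ j → Disjoint (Vpart i) (Vpart j))
    (hcover : Finset.univ.sup Vpart = Vs)
    (hcomp : ∀ e ∈ E, 0 < x e → ∀ i j, i ≠ j →
      ¬((e ∩ Vpart i).Nonempty ∧ (e ∩ Vpart j).Nonempty))
    (S : Finset V) (hS : S ⊆ Vs)
    (hviol : (S.card : ℝ) - xWeight E x S < 1) :
    ∃ j, ((S ∩ Vpart j).card : ℝ) - xWeight E x (S ∩ Vpart j) < 1 :=
  stmt6_general Vs E x hx k hk Vpart hdisj hcover hcomp S hS hviol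
end

section
/- If H = (V, E) is a spanning tree in a hypergraph and S ⊆ V with |S| ≥ 2, then the subhypergraph induced by S is a forest of j trees for some 1 ≤ j ≤ |S|, and Σ_{e ∈ E} max(|e ∩ S| - 1, 0) = |S| - j; in particular Σ_{e ∈ E} max(|e ∩ S| - 1, 0) ≤ |S| - 1. -/
/-! The induced incidence graph is a subgraph of the incidence tree, hence a forest, and a
forest with `j` components on `n` vertices has `n - j` edges (each component is a tree). Its
vertices are the points of `S` together with the `k` edges meeting `S`, and its edges are the
incidences `v ∈ e ∩ S`, so `∑ |e ∩ S| + j = |S| + k`. Since `∑ (|e ∩ S| - 1) + k = ∑ |e ∩ S|`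
in truncated subtraction, this is `∑ (|e ∩ S| - 1) = |S| - j`. -/

open Finset

/-- The bipartite incidence graph of a hypergraph with edge set `E`. -/
def incidenceGraph {V : Type*} (E : Finset (Finset V)) :
    SimpleGraph (V ⊕ {e : Finset V // e ∈ E}) where
  Adj a b :=
    (∃ (v : V) (e : {e : Finset V // e ∈ E}),
        v ∈ (e : Finset V) ∧ a = Sum.inl v ∧ b = Sum.inr e) ∨
    (∃ (v : V) (e : {e : Finset V // e ∈ E}),
        v ∈ (e : Finset V) ∧ a = Sum.inr e ∧ b = Sum.inl v)
  symm := by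
    constructor
    rintro a b (⟨v, e, h, rfl, rfl⟩ | ⟨v, e, h, rfl, rfl⟩)
    · exact Or.inr ⟨v, e, h, rfl, rfl⟩
    · exact Or.inl ⟨v, e, h, rfl, rfl⟩
  loopless := by
    constructor
    rintro a (⟨v, e, h, rfl, h2⟩ | ⟨v, e, h, rfl, h2⟩) <;> simp at h2

/-- The bipartite incidence graph of the subhypergraph induced by `S`:
vertices are the elements of `S`, edge nodes are the edges of `E` meeting `S`,
with adjacency "the vertex belongs to the edge". -/
def inducedIncidenceGraph {V : Type*} [DecidableEq V] (E : Finset (Finset V))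
    (S : Finset V) :
    SimpleGraph ({v : V // v ∈ S} ⊕ {e : Finset V // e ∈ E ∧ (e ∩ S).Nonempty}) where
  Adj a b :=
    (∃ (v : {v : V // v ∈ S}) (e : {e : Finset V // e ∈ E ∧ (e ∩ S).Nonempty}),
        (v : V) ∈ (e : Finset V) ∧ a = Sum.inl v ∧ b = Sum.inr e) ∨
    (∃ (v : {v : V // v ∈ S}) (e : {e : Finset V // e ∈ E ∧ (e ∩ S).Nonempty}),
        (v : V) ∈ (e : Finset V) ∧ a = Sum.inr e ∧ b = Sum.inl v)
  symm := by
    constructor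
    rintro a b (⟨v, e, h, rfl, rfl⟩ | ⟨v, e, h, rfl, rfl⟩)
    · exact Or.inr ⟨v, e, h, rfl, rfl⟩
    · exact Or.inl ⟨v, e, h, rfl, rfl⟩
  loopless := by
    constructor
    rintro a (⟨v, e, h, rfl, h2⟩ | ⟨v, e, h, rfl, h2⟩) <;> simp at h2

namespace SimpleGraph
variable {V : Type*} {G : SimpleGraph V}

lemma card_eq_sum_card_supp [Finite V] [Fintype G.ConnectedComponent] :
    Nat.card V = ∑ c : G.ConnectedComponent, Nat.card c.supp := by
  rw [← Nat.card_sigma]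
  exact Nat.card_congr (Equiv.sigmaFiberEquiv G.connectedComponentMk).symm

lemma card_edgeSet_eq_sum_card_edgeSet_toSimpleGraph [Finite V] [Fintype G.ConnectedComponent] :
    Nat.card G.edgeSet = ∑ c : G.ConnectedComponent, Nat.card c.toSimpleGraph.edgeSet := by
  rw [← Nat.card_sigma]
  symm
  refine Nat.card_eq_of_bijective
    (fun x => ⟨Sym2.map Subtype.val x.2.1, ?_⟩) ⟨?_, ?_⟩
  · obtain ⟨c, e, he⟩ := x
    induction e using Sym2.ind
    exact he
  · rintro ⟨c, e, _⟩ ⟨d, e', _⟩ h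
    replace h : Sym2.map Subtype.val e = Sym2.map Subtype.val e' := congrArg Subtype.val h
    obtain rfl : c = d := by
      induction e using Sym2.ind with | _ u w =>
      obtain ⟨u', -, hu'⟩ := Sym2.mem_map.1 (h ▸ Sym2.mem_map.2 ⟨u, Sym2.mem_mk_left _ _, rfl⟩)
      exact u.2.symm.trans (hu' ▸ u'.2)
    obtain rfl : e = e' := Sym2.map.injective Subtype.val_injective h
    rfl
  · rintro ⟨e, he⟩
    induction e using Sym2.ind with | _ u v =>
    have hv : v ∈ (G.connectedComponentMk u).supp := (ConnectedComponent.sound he.reachable).symm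
    exact ⟨⟨G.connectedComponentMk u, s(⟨u, rfl⟩, ⟨v, hv⟩), he⟩, rfl⟩

theorem IsAcyclic.card_edgeSet_add_card_connectedComponent [Finite V] (h : G.IsAcyclic) :
    Nat.card G.edgeSet + Nat.card G.ConnectedComponent = Nat.card V := by
  have := Fintype.ofFinite G.ConnectedComponent
  rw [card_eq_sum_card_supp (G := G), card_edgeSet_eq_sum_card_edgeSet_toSimpleGraph,
    Nat.card_eq_fintype_card, Fintype.card_eq_sum_ones, ← sum_add_distrib]
  exact sum_congr rfl fun c _ =>
    (isTree_iff_connected_and_card.1 (h.isTree_connectedComponent c)).2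

end SimpleGraph

lemma Finset.sum_tsub_one_add_card_filter_ne_zero {ι : Type*} (s : Finset ι) (f : ι → ℕ) :
    ∑ i ∈ s, (f i - 1) + #{i ∈ s | f i ≠ 0} = ∑ i ∈ s, f i := by
  rw [card_filter, ← sum_add_distrib]
  exact sum_congr rfl fun i _ => by split_ifs <;> omega

section InducedIncidenceGraph

variable {V : Type*} [DecidableEq V] (E : Finset (Finset V)) (S : Finset V)

def inducedIncidenceGraphHom : inducedIncidenceGraph E S →g incidenceGraph E where
  toFun := Sum.map Subtype.val fun e => ⟨e.1, e.2.1⟩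
  map_rel' := by
    rintro _ _ (⟨v, e, h, rfl, rfl⟩ | ⟨v, e, h, rfl, rfl⟩)
    · exact Or.inl ⟨v, ⟨e, e.2.1⟩, h, rfl, rfl⟩
    · exact Or.inr ⟨v, ⟨e, e.2.1⟩, h, rfl, rfl⟩

lemma inducedIncidenceGraphHom_injective : Function.Injective (inducedIncidenceGraphHom E S) :=
  Subtype.val_injective.sumMap fun _ _ h => Subtype.ext (Subtype.ext_iff.1 h :)

variable {E} in
lemma isAcyclic_inducedIncidenceGraph (h : (incidenceGraph E).IsAcyclic) :
    (inducedIncidenceGraph E S).IsAcyclic :=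
  h.comap _ (inducedIncidenceGraphHom_injective E S)

lemma card_inducedIncidenceGraph_verts :
    Nat.card ({v : V // v ∈ S} ⊕ {e : Finset V // e ∈ E ∧ (e ∩ S).Nonempty}) =
      #S + #{e ∈ E | (e ∩ S).Nonempty} := by
  have hE : {e : Finset V // e ∈ E ∧ (e ∩ S).Nonempty} ≃ {e ∈ E | (e ∩ S).Nonempty} :=
    Equiv.subtypeEquivRight fun _ => by rw [mem_filter]
  rw [Nat.card_congr ((Equiv.refl _).sumCongr hE), Nat.card_sum, Nat.card_eq_finsetCard,
    Nat.card_eq_finsetCard]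

lemma card_edgeSet_inducedIncidenceGraph :
    Nat.card (inducedIncidenceGraph E S).edgeSet = ∑ e ∈ E, #(e ∩ S) := by
  have hincidences : Nat.card (inducedIncidenceGraph E S).edgeSet =
      Nat.card (Σ e : ({e ∈ E | (e ∩ S).Nonempty} : Finset _), {v : S // v.1 ∈ e.1}) := by
    symm
    refine Nat.card_eq_of_bijective (fun p => ⟨s(.inl p.2, .inr ⟨p.1, mem_filter.1 p.1.2⟩),
      Or.inl ⟨p.2, _, p.2.2, rfl, rfl⟩⟩) ⟨?_, ?_⟩
    · rintro ⟨e, v⟩ ⟨e', v'⟩ h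
      replace h := Sym2.eq_iff.1 (congrArg Subtype.val h)
      rcases h with ⟨hv, he⟩ | ⟨hv, -⟩
      · obtain rfl : e = e' := Subtype.ext (Subtype.ext_iff.1 (Sum.inr_injective he) :)
        obtain rfl : v = v' := Subtype.ext (Sum.inl_injective hv)
        rfl
      · exact absurd hv Sum.inl_ne_inr
    · rintro ⟨e, he⟩
      induction e using Sym2.ind with | _ a b =>
      rcases (SimpleGraph.mem_edgeSet _).1 he with
        ⟨v, e, hve, rfl, rfl⟩ | ⟨v, e, hve, rfl, rfl⟩
      · exact ⟨⟨⟨e, mem_filter.2 e.2⟩, v, hve⟩, rfl⟩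
      · exact ⟨⟨⟨e, mem_filter.2 e.2⟩, v, hve⟩, Subtype.ext Sym2.eq_swap⟩
  have hfiber (e : Finset V) : Nat.card {v : S // v.1 ∈ e} = #(e ∩ S) := by
    rw [← Nat.card_eq_finsetCard]
    exact Nat.card_congr ((Equiv.subtypeSubtypeEquivSubtypeInter _ _).trans
      (Equiv.subtypeEquivRight fun v => by rw [mem_inter, and_comm]))
  rw [hincidences, Nat.card_sigma]
  simp only [hfiber]
  exact (sum_coe_sort _ fun e => #(e ∩ S)).trans
    (sum_filter_of_ne fun e _ he => card_ne_zero.1 he)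

end InducedIncidenceGraph

theorem stmt8_general {V : Type*} [Fintype V] [DecidableEq V] (E : Finset (Finset V))
    (htree : (incidenceGraph E).IsTree)
    (S : Finset V) (hS : 2 ≤ S.card) :
    (inducedIncidenceGraph E S).IsAcyclic ∧
    1 ≤ Nat.card (inducedIncidenceGraph E S).ConnectedComponent ∧
    Nat.card (inducedIncidenceGraph E S).ConnectedComponent ≤ S.card ∧
    ∑ e ∈ E, ((e ∩ S).card - 1) =
      S.card - Nat.card (inducedIncidenceGraph E S).ConnectedComponent ∧
    ∑ e ∈ E, ((e ∩ S).card - 1) ≤ S.card - 1 := by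
  have hacyclic := isAcyclic_inducedIncidenceGraph S htree.isAcyclic
  have hforest := hacyclic.card_edgeSet_add_card_connectedComponent
  rw [card_edgeSet_inducedIncidenceGraph, card_inducedIncidenceGraph_verts] at hforest
  have hsum := sum_tsub_one_add_card_filter_ne_zero E fun e => #(e ∩ S)
  simp only [card_ne_zero] at hsum
  obtain ⟨v, hv⟩ := card_pos.1 (by omega : 0 < #S)
  have : Nonempty (inducedIncidenceGraph E S).ConnectedComponent :=
    ⟨(inducedIncidenceGraph E S).connectedComponentMk (.inl ⟨v, hv⟩)⟩
  have hcomponents := Nat.card_pos (α := (inducedIncidenceGraph E S).ConnectedComponent)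
  exact ⟨hacyclic, hcomponents, by omega, by omega, by omega⟩

/-- If `H = (V, E)` is a spanning tree in a hypergraph and `S ⊆ V` with `|S| ≥ 2`,
then the subhypergraph induced by `S` is a forest (acyclic) of `j` trees for some
`1 ≤ j ≤ |S|` (where `j` is its number of connected components), and
`Σ_{e ∈ E} max(|e ∩ S| - 1, 0) = |S| - j`; in particular
`Σ_{e ∈ E} max(|e ∩ S| - 1, 0) ≤ |S| - 1`. -/
theorem stmt8 {V : Type*} [Fintype V] [DecidableEq V] (E : Finset (Finset V))
    (hcard : ∀ e ∈ E, 2 ≤ e.card)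
    (htree : (incidenceGraph E).IsTree)
    (S : Finset V) (hS : 2 ≤ S.card) :
    (inducedIncidenceGraph E S).IsAcyclic ∧
    1 ≤ Nat.card (inducedIncidenceGraph E S).ConnectedComponent ∧
    Nat.card (inducedIncidenceGraph E S).ConnectedComponent ≤ S.card ∧
    ∑ e ∈ E, ((e ∩ S).card - 1) =
      S.card - Nat.card (inducedIncidenceGraph E S).ConnectedComponent ∧
    ∑ e ∈ E, ((e ∩ S).card - 1) ≤ S.card - 1 :=
  stmt8_general E htree S hS
end

section
/- Augmentation via connected components: Let H = (V, E) be a hypergraph, S ⊊ V with |S| ≥ 2, and x : E → ℝ with x(V) = |V| - 1 and x(S) > |S| - 1. Let V_1, …, V_k be the vertex sets of the connected components of the support subhypergraph induced on V \ S, and let S_i = V \ V_i. Then there exists i with x(S_i) > |S_i| - 1. -/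
/-!
Both `x(·)` and `A ↦ |A| - 1` satisfy `∑ᵢ f(V \ Vᵢ) + f(V) = k f(V) + f(S)`. For `x` this is
checked edge by edge: an edge of positive weight meets at most one `Vⱼ`, so `V \ Vᵢ` contains
all of it for `i ≠ j`, while `V \ Vⱼ` contains exactly its part in `S`. Hence the surplus
`x(A) - (|A| - 1)` satisfies the same identity; it vanishes at `V` and is positive at `S`, so it
is positive at some `V \ Vᵢ`.
-/

open Finset

section

variable {V ι : Type*} [DecidableEq V] [Fintype ι]

theorem sum_apply_sdiff_add_eq_of_meets_at_most_one {M : Type*} [AddCommMonoid M]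
    (g : Finset V → M) {P : ι → Finset V} {S e : Finset V}
    (hPS : ∀ i, Disjoint (P i) S) (he : e \ S ⊆ univ.sup P)
    (hmeet : ∀ i j, (e ∩ P i).Nonempty → (e ∩ P j).Nonempty → i = j) :
    ∑ i, g (e \ P i) + g e = Fintype.card ι • g e + g (e ∩ S) := by
  classical
  have hcard : Fintype.card ι • g e = ∑ _i : ι, g e := by simp
  by_cases hj : ∃ j, (e ∩ P j).Nonempty
  · obtain ⟨j, hej⟩ := hj
    have hoff : ∀ i ∈ univ.erase j, g (e \ P i) = g e := fun i hi => by
      rw [sdiff_eq_self_of_disjoint]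
      rw [disjoint_iff_inter_eq_empty, ← not_nonempty_iff_eq_empty]
      exact fun hei => ne_of_mem_erase hi (hmeet i j hei hej)
    have hon : e \ P j = e ∩ S := by
      ext v
      simp only [mem_sdiff, mem_inter]
      refine ⟨fun ⟨hv, hvj⟩ => ⟨hv, by_contra fun hvS => ?_⟩,
        fun ⟨hv, hvS⟩ => ⟨hv, disjoint_right.mp (hPS j) hvS⟩⟩
      obtain ⟨i, -, hvi⟩ := mem_sup.mp (he (mem_sdiff.mpr ⟨hv, hvS⟩))
      obtain rfl := hmeet i j ⟨v, mem_inter.mpr ⟨hv, hvi⟩⟩ hej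
      exact hvj hvi
    rw [hcard, ← add_sum_erase _ _ (mem_univ j), ← add_sum_erase _ _ (mem_univ j),
      sum_congr rfl hoff, hon]
    abel
  · have hj : ∀ i, ¬(e ∩ P i).Nonempty := not_exists.mp hj
    have hall : ∀ i, e \ P i = e := fun i => sdiff_eq_self_of_disjoint <|
      disjoint_iff_inter_eq_empty.mpr (not_nonempty_iff_eq_empty.mp (hj i))
    have heS : e ∩ S = e := inter_eq_left.mpr fun v hv => by_contra fun hvS => by
      obtain ⟨i, -, hvi⟩ := mem_sup.mp (he (mem_sdiff.mpr ⟨hv, hvS⟩))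
      exact hj i ⟨v, mem_inter.mpr ⟨hv, hvi⟩⟩
    simp only [hall, heS, hcard]

theorem xWeight_sum_sdiff_add_eq {E : Finset (Finset V)} {x : Finset V → ℝ}
    {Vs S : Finset V} {P : ι → Finset V} (hE : ∀ e ∈ E, e ⊆ Vs) (hx : ∀ e ∈ E, 0 ≤ x e)
    (hcover : univ.sup P = Vs \ S)
    (hmeet : ∀ e ∈ E, 0 < x e → ∀ i j, (e ∩ P i).Nonempty → (e ∩ P j).Nonempty → i = j) :
    ∑ i, xWeight E x (Vs \ P i) + xWeight E x Vs =
      Fintype.card ι * xWeight E x Vs + xWeight E x S := by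
  have hPS : ∀ i, Disjoint (P i) S := fun i =>
    sdiff_disjoint.mono_left ((le_sup (f := P) (mem_univ i)).trans hcover.le)
  unfold xWeight
  rw [sum_comm, ← sum_add_distrib, mul_sum, ← sum_add_distrib]
  refine sum_congr rfl fun e he => ?_
  obtain hzero | hpos := (hx e he).eq_or_lt
  · simp [← hzero]
  have hinter : ∀ A, e ∩ (Vs \ A) = e \ A := fun A => by
    rw [← inter_sdiff_assoc, inter_eq_left.mpr (hE e he)]
  simp only [hinter, inter_eq_left.mpr (hE e he)]
  have := sum_apply_sdiff_add_eq_of_meets_at_most_one (fun B => ((B.card - 1 : ℕ) : ℝ) * x e)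
    hPS (hcover ▸ sdiff_subset_sdiff (hE e he) le_rfl) (hmeet e he hpos)
  rwa [nsmul_eq_mul] at this

theorem card_sum_sdiff_add_eq {Vs S : Finset V} {P : ι → Finset V} (hS : S ⊆ Vs)
    (hdisj : Pairwise fun i j => Disjoint (P i) (P j)) (hcover : univ.sup P = Vs \ S) :
    ∑ i, (Vs \ P i).card + Vs.card = Fintype.card ι * Vs.card + S.card := by
  have hPVs : ∀ i, P i ⊆ Vs := fun i =>
    (le_sup (f := P) (mem_univ i)).trans hcover.le |>.trans sdiff_subset
  have hparts : ∑ i, (P i).card + S.card = Vs.card := by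
    rw [← card_biUnion fun i _ j _ hij => hdisj hij, ← sup_eq_biUnion, hcover,
      card_sdiff_add_card_eq_card hS]
  have hcompl : ∑ i, (Vs \ P i).card + ∑ i, (P i).card = Fintype.card ι * Vs.card := by
    simp [← sum_add_distrib, card_sdiff_add_card_eq_card (hPVs _)]
  omega

end

theorem stmt9_general {V : Type*} [DecidableEq V] (Vs : Finset V) (E : Finset (Finset V))
    (x : Finset V → ℝ) (hE : ∀ e ∈ E, e ⊆ Vs) (hx : ∀ e ∈ E, 0 ≤ x e)
    (S : Finset V) (hS : S ⊂ Vs)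
    (hdeg : xWeight E x Vs = (Vs.card : ℝ) - 1)
    (hviol : ((S.card : ℝ) - 1) < xWeight E x S)
    (k : ℕ) (Vpart : Fin k → Finset V)
    (hdisj : ∀ i j, i ≠ j → Disjoint (Vpart i) (Vpart j))
    (hcover : Finset.univ.sup Vpart = Vs \ S)
    (hcomp : ∀ e ∈ E, 0 < x e → ∀ i j, i ≠ j →
      ¬((e ∩ Vpart i).Nonempty ∧ (e ∩ Vpart j).Nonempty)) :
    ∃ i, (((Vs \ Vpart i).card : ℝ) - 1) < xWeight E x (Vs \ Vpart i) := by
  by_contra! hnone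
  have hweight := xWeight_sum_sdiff_add_eq hE hx hcover
    fun e he hpos i j hi hj => by_contra fun hij => hcomp e he hpos i j hij ⟨hi, hj⟩
  have hcard : ∑ i, ((Vs \ Vpart i).card : ℝ) + Vs.card = k * Vs.card + S.card := by
    have := card_sum_sdiff_add_eq hS.subset (fun i j => hdisj i j) hcover
    rw [Fintype.card_fin] at this
    exact_mod_cast this
  have hsum := sum_le_sum fun i (_ : i ∈ univ) => hnone i
  rw [sum_sub_distrib] at hsum
  simp only [sum_const, card_univ, Fintype.card_fin, nsmul_eq_mul, mul_one] at hsum hweight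
  rw [hdeg] at hweight
  linarith

/-- Augmentation via connected components: if `x(V) = |V| - 1`, the subtour `S`
(`S ⊊ V`, `|S| ≥ 2`) is violated, and `V_1, …, V_k` are the vertex sets of the
connected components of the support subhypergraph induced on `V \ S` (so they
partition `V \ S`, are nonempty, and no positive-weight edge meets two of them),
then some `S_i = V \ V_i` is a violated subtour. -/
theorem stmt9 {V : Type*} [DecidableEq V] (Vs : Finset V) (E : Finset (Finset V))
    (x : Finset V → ℝ) (hE : ∀ e ∈ E, e ⊆ Vs) (hx : ∀ e ∈ E, 0 ≤ x e)
    (S : Finset V) (hS : S ⊂ Vs) (hS2 : 2 ≤ S.card)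
    (hdeg : xWeight E x Vs = (Vs.card : ℝ) - 1)
    (hviol : ((S.card : ℝ) - 1) < xWeight E x S)
    (k : ℕ) (Vpart : Fin k → Finset V)
    (hne : ∀ i, (Vpart i).Nonempty)
    (hdisj : ∀ i j, i ≠ j → Disjoint (Vpart i) (Vpart j))
    (hcover : Finset.univ.sup Vpart = Vs \ S)
    (hcomp : ∀ e ∈ E, 0 < x e → ∀ i j, i ≠ j →
      ¬((e ∩ Vpart i).Nonempty ∧ (e ∩ Vpart j).Nonempty)) :
    ∃ i, (((Vs \ Vpart i).card : ℝ) - 1) < xWeight E x (Vs \ Vpart i) :=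
  stmt9_general Vs E x hE hx S hS hdeg hviol k Vpart hdisj hcover hcomp
end
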